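/- arXiv:1605.07224 — 4 statements merged into one kernel-verified Lean document; each statement's English description precedes it below -/
import Mathlib

section
/- Let M be an NFA over alphabet Σ with transition relation T ⊆ Q × Σ × Q, and for each state p and symbol a let k(p,a) be the number of states p' with (p,a,p') ∈ T. Define the cost of a run τ = t₁⋯t_n (with t_i = (p_i, a_i, p_{i+1})) as 𝐕(τ) = Π_{i} k(p_i, a_i). Then for every state p, every word α of length n, Σ_{τ : run on α of length n starting at p} 𝐕(τ) ≥ (number of runs on α of length n starting at p)². -/
def IsRun {Q A : Type*} (T : Set (Q × A × Q)) : Q → List A → List Q → Prop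
  | _, [], [] => True
  | p, a :: α, q :: qs => (p, a, q) ∈ T ∧ IsRun T q α qs
  | _, _, _ => False

noncomputable def branch {Q A : Type*} (T : Set (Q × A × Q)) (p : Q) (a : A) : ℕ :=
  Nat.card {p' : Q // (p, a, p') ∈ T}

noncomputable def runV {Q A : Type*} (T : Set (Q × A × Q)) : Q → List A → List Q → ℝ
  | _, [], [] => 1
  | p, a :: α, q :: qs => (branch T p a : ℝ) * runV T q α qs
  | _, _, _ => 0

theorem isRun_length {Q A : Type*} (T : Set (Q × A × Q)) :
    ∀ (p : Q) (α : List A) (qs : List Q), IsRun T p α qs → qs.length = α.length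
  | _, [], [], _ => rfl
  | p, a :: α, q :: qs, h => by simpa using isRun_length T q α qs h.2
  | _, [], _ :: _, h => h.elim
  | _, _ :: _, [], h => h.elim

instance runFinite {Q A : Type*} [Finite Q] (T : Set (Q × A × Q)) (p : Q) (α : List A) :
    Finite {qs : List Q // IsRun T p α qs} := by
  have hfin : Finite {l : List Q | l.length = α.length} :=
    (List.finite_length_eq Q α.length).to_subtype
  apply Finite.of_injective
    ((fun x => ⟨x.1, isRun_length T p α x.1 x.2⟩) :
      {qs : List Q // IsRun T p α qs} → {l : List Q | l.length = α.length})
  rintro ⟨x, _⟩ ⟨y, _⟩ h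
  simpa [Subtype.ext_iff] using congrArg Subtype.val h

instance runNilUnique {Q A : Type*} (T : Set (Q × A × Q)) (p : Q) :
    Unique {qs : List Q // IsRun T p ([] : List A) qs} where
  default := ⟨[], trivial⟩
  uniq := by
    rintro ⟨(_ | ⟨q, qs⟩), h⟩
    · rfl
    · exact h.elim

def runEquiv {Q A : Type*} (T : Set (Q × A × Q)) (p : Q) (a : A) (α : List A) :
    {qs : List Q // IsRun T p (a :: α) qs} ≃
      Σ q : {q : Q // (p, a, q) ∈ T}, {qs : List Q // IsRun T q.1 α qs} where
  toFun x := match x with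
    | ⟨q :: qs, h⟩ => ⟨⟨q, h.1⟩, ⟨qs, h.2⟩⟩
    | ⟨[], h⟩ => h.elim
  invFun x := ⟨x.1.1 :: x.2.1, x.1.2, x.2.2⟩
  left_inv := by
    rintro ⟨(_ | ⟨q, qs⟩), h⟩
    · exact h.elim
    · rfl
  right_inv := by rintro ⟨⟨q, hq⟩, ⟨qs, h⟩⟩; rfl

/-- for every state `p` and word `α`, the sum of the weights `𝐕(τ)` over
runs `τ` on `α` starting at `p` is at least the square of the number of such runs. -/
theorem stmt10 {Q A : Type*} [Fintype Q] [Fintype A]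
    (T : Set (Q × A × Q)) (p : Q) (α : List A) :
    ((Nat.card {qs : List Q // IsRun T p α qs} : ℝ)) ^ 2 ≤
      ∑' qs : {qs : List Q // IsRun T p α qs}, runV T p α qs.1 := by
  classical
  induction α generalizing p with
  | nil =>
    rw [tsum_eq_single (default : {qs : List Q // IsRun T p ([] : List A) qs})
      (fun b hb => absurd (Subsingleton.elim b default) hb)]
    simp [Nat.card_unique]
    exact le_of_eq rfl
  | cons a α ih =>
    have hF : ∀ q : Q, Fintype {qs : List Q // IsRun T q α qs} := fun q => Fintype.ofFinite _
    have hFc : Fintype {qs : List Q // IsRun T p (a :: α) qs} := Fintype.ofFinite _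
    have hFq : Fintype {q : Q // (p, a, q) ∈ T} := Fintype.ofFinite _
    rw [tsum_fintype]
    rw [← Equiv.sum_comp (runEquiv T p a α).symm
      (fun qs : {qs : List Q // IsRun T p (a :: α) qs} => runV T p (a :: α) qs.1)]
    have hcard : (Nat.card {qs : List Q // IsRun T p (a :: α) qs} : ℝ) =
        ∑ q : {q : Q // (p, a, q) ∈ T}, (Nat.card {qs : List Q // IsRun T q.1 α qs} : ℝ) := by
      rw [Nat.card_congr (runEquiv T p a α), Nat.card_eq_fintype_card, Fintype.card_sigma]
      push_cast
      exact Finset.sum_congr rfl fun q _ => by rw [Nat.card_eq_fintype_card]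
    have hsum : ∑ x : Σ q : {q : Q // (p, a, q) ∈ T}, {qs : List Q // IsRun T q.1 α qs},
        runV T p (a :: α) ((runEquiv T p a α).symm x).1 =
        (branch T p a : ℝ) * ∑ q : {q : Q // (p, a, q) ∈ T},
          ∑ qs : {qs : List Q // IsRun T q.1 α qs}, runV T q.1 α qs.1 := by
      rw [← Finset.univ_sigma_univ, Finset.sum_sigma, Finset.mul_sum]
      refine Finset.sum_congr rfl fun q _ => ?_
      rw [Finset.mul_sum]
      exact Finset.sum_congr rfl fun qs _ => rfl
    rw [hsum, hcard]
    have hk : (branch T p a : ℝ) = (Fintype.card {q : Q // (p, a, q) ∈ T} : ℝ) := by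
      rw [branch, Nat.card_eq_fintype_card]
    calc (∑ q : {q : Q // (p, a, q) ∈ T}, (Nat.card {qs : List Q // IsRun T q.1 α qs} : ℝ)) ^ 2
        ≤ (Fintype.card {q : Q // (p, a, q) ∈ T} : ℝ) *
          ∑ q : {q : Q // (p, a, q) ∈ T}, (Nat.card {qs : List Q // IsRun T q.1 α qs} : ℝ) ^ 2 := by
          simpa using sq_sum_le_card_mul_sum_sq
            (s := (Finset.univ : Finset {q : Q // (p, a, q) ∈ T}))
            (f := fun q => (Nat.card {qs : List Q // IsRun T q.1 α qs} : ℝ))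
      _ ≤ (branch T p a : ℝ) * ∑ q : {q : Q // (p, a, q) ∈ T},
          ∑ qs : {qs : List Q // IsRun T q.1 α qs}, runV T q.1 α qs.1 := by
          rw [hk]
          refine mul_le_mul_of_nonneg_left (Finset.sum_le_sum fun q _ => ?_) (by positivity)
          simpa [tsum_fintype] using ih q.1
end

section
/- Let M be an NFA with initial state p₀, and for each n let f(n) be the number of runs of length n starting at p₀, g(n) the number of distinct words of length n labeling such runs, and E(n) = Σ_{τ : |τ|=n, τ starts at p₀} 𝐕(τ), where 𝐕(τ) = Π k(p_i, a_i) as above. Then for every n, E(n) · g(n) ≥ f(n)². -/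
/-- `f(n)`: the number of runs of length `n` from `p₀`. -/
noncomputable def fcount {Q A : Type*} (T : Set (Q × A × Q)) (p₀ : Q) (n : ℕ) : ℕ :=
  Nat.card {x : List A × List Q // x.1.length = n ∧ IsRun T p₀ x.1 x.2}

/-- `g(n)`: the number of words of length `n` admitting a run from `p₀`. -/
noncomputable def gcount {Q A : Type*} (T : Set (Q × A × Q)) (p₀ : Q) (n : ℕ) : ℕ :=
  Nat.card {α : List A // α.length = n ∧ ∃ qs, IsRun T p₀ α qs}

/-- `E(n)`: the sum of the weights `𝐕(τ)` over all runs of length `n` from `p₀`. -/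
noncomputable def Esum {Q A : Type*} (T : Set (Q × A × Q)) (p₀ : Q) (n : ℕ) : ℝ :=
  ∑' x : {x : List A × List Q // x.1.length = n ∧ IsRun T p₀ x.1 x.2},
    runV T p₀ x.1.1 x.1.2

section Aux

attribute [local instance] Classical.propDecidable

variable {Q A : Type*} [Fintype Q] [Fintype A]

/-- Finset of runs on a word `α` from `p`. -/
noncomputable def runsF (T : Set (Q × A × Q)) : Q → List A → Finset (List Q)
  | _, [] => {[]}
  | p, a :: α => (Finset.univ.filter fun q => (p, a, q) ∈ T).biUnion
      fun q => (runsF T q α).image (q :: ·)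

lemma mem_runsF (T : Set (Q × A × Q)) :
    ∀ (α : List A) (p : Q) (qs : List Q), qs ∈ runsF T p α ↔ IsRun T p α qs := by
  intro α
  induction α with
  | nil => intro p qs; cases qs <;> simp [runsF, IsRun]
  | cons a α ih =>
    intro p qs
    cases qs with
    | nil => simp [runsF, IsRun]
    | cons q qs =>
      simp only [runsF, Finset.mem_biUnion, Finset.mem_filter, Finset.mem_univ, true_and,
        Finset.mem_image, IsRun]
      constructor
      · rintro ⟨q', hq', qs', hqs', heq⟩
        obtain ⟨rfl, rfl⟩ := List.cons.injEq .. ▸ heq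
        exact ⟨hq', (ih q' qs').mp hqs'⟩
      · rintro ⟨h1, h2⟩
        exact ⟨q, h1, qs, (ih q qs).mpr h2, rfl⟩

lemma branch_eq (T : Set (Q × A × Q)) (p : Q) (a : A) :
    branch T p a = (Finset.univ.filter fun q => (p, a, q) ∈ T).card := by
  rw [branch, Nat.card_eq_fintype_card, Fintype.card_subtype]

lemma runV_nonneg (T : Set (Q × A × Q)) :
    ∀ (α : List A) (p : Q) (qs : List Q), 0 ≤ runV T p α qs := by
  intro α
  induction α with
  | nil => intro p qs; cases qs <;> simp [runV]
  | cons a α ih =>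
    intro p qs
    cases qs with
    | nil => simp [runV]
    | cons q qs => exact mul_nonneg (by positivity) (ih q qs)

/-- Per-word Cauchy–Schwarz: the number of runs squared is at most the sum of weights. -/
lemma key (T : Set (Q × A × Q)) :
    ∀ (α : List A) (p : Q),
      ((runsF T p α).card : ℝ) ^ 2 ≤ ∑ qs ∈ runsF T p α, runV T p α qs := by
  intro α
  induction α with
  | nil => intro p; simp [runsF, runV]
  | cons a α ih =>
    intro p
    set B := Finset.univ.filter fun q => (p, a, q) ∈ T with hB
    have hdisj : ∀ x ∈ B, ∀ y ∈ B, x ≠ y →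
        Disjoint ((runsF T x α).image (x :: ·)) ((runsF T y α).image (y :: ·)) := by
      intro x _ y _ hxy
      simp only [Finset.disjoint_left, Finset.mem_image]
      rintro l ⟨u, _, rfl⟩ ⟨v, _, hv⟩
      exact hxy (List.cons.injEq .. ▸ hv).1.symm
    have hrw : runsF T p (a :: α) = B.biUnion fun q => (runsF T q α).image (q :: ·) := rfl
    have hcard : ((runsF T p (a :: α)).card : ℝ) = ∑ q ∈ B, ((runsF T q α).card : ℝ) := by
      rw [hrw, Finset.card_biUnion hdisj]
      push_cast
      refine Finset.sum_congr rfl fun q _ => ?_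
      rw [Finset.card_image_of_injective _ (List.cons_injective)]
    have hsum : ∑ qs ∈ runsF T p (a :: α), runV T p (a :: α) qs
        = (B.card : ℝ) * ∑ q ∈ B, ∑ qs ∈ runsF T q α, runV T q α qs := by
      rw [hrw, Finset.sum_biUnion hdisj, Finset.mul_sum]
      refine Finset.sum_congr rfl fun q _ => ?_
      rw [Finset.sum_image (fun u _ v _ h => List.cons_injective h), Finset.mul_sum]
      refine Finset.sum_congr rfl fun qs _ => ?_
      simp [runV, branch_eq, hB]
    rw [hcard, hsum]
    calc (∑ q ∈ B, ((runsF T q α).card : ℝ)) ^ 2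
        ≤ (B.card : ℝ) * ∑ q ∈ B, ((runsF T q α).card : ℝ) ^ 2 := by
          exact_mod_cast sq_sum_le_card_mul_sum_sq
      _ ≤ (B.card : ℝ) * ∑ q ∈ B, ∑ qs ∈ runsF T q α, runV T q α qs := by
          refine mul_le_mul_of_nonneg_left (Finset.sum_le_sum fun q _ => ih q) (by positivity)

/-- All words of length `n`. -/
noncomputable def allWords (A : Type*) [Fintype A] : ℕ → Finset (List A)
  | 0 => {[]}
  | n + 1 => Finset.univ.biUnion fun a : A => (allWords A n).image (a :: ·)

lemma mem_allWords : ∀ (n : ℕ) (α : List A), α ∈ allWords A n ↔ α.length = n := by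
  intro n
  induction n with
  | zero => intro α; cases α <;> simp [allWords]
  | succ n ih =>
    intro α
    cases α with
    | nil => simp [allWords]
    | cons a α =>
      simp only [allWords, Finset.mem_biUnion, Finset.mem_univ, true_and, Finset.mem_image,
        List.length_cons, Nat.add_right_cancel_iff]
      constructor
      · rintro ⟨b, β, hβ, heq⟩
        obtain ⟨rfl, rfl⟩ := List.cons.injEq .. ▸ heq
        exact (ih β).mp hβ
      · intro h; exact ⟨a, α, (ih α).mpr h, rfl⟩

/-- All runs of length `n` from `p₀`, as pairs (word, state sequence). -/
noncomputable def runsAll (T : Set (Q × A × Q)) (p₀ : Q) (n : ℕ) : Finset (List A × List Q) :=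
  (allWords A n).biUnion fun α => (runsF T p₀ α).image fun qs => (α, qs)

lemma runsAll_disj (T : Set (Q × A × Q)) (p₀ : Q) (n : ℕ) :
    ∀ x ∈ allWords A n, ∀ y ∈ allWords A n, x ≠ y →
      Disjoint ((runsF T p₀ x).image fun qs => (x, qs))
        ((runsF T p₀ y).image fun qs => (y, qs)) := by
  intro x _ y _ hxy
  simp only [Finset.disjoint_left, Finset.mem_image]
  rintro l ⟨u, _, rfl⟩ ⟨v, _, hv⟩
  exact hxy (congrArg Prod.fst hv).symm

lemma mem_runsAll (T : Set (Q × A × Q)) (p₀ : Q) (n : ℕ) (x : List A × List Q) :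
    x ∈ runsAll T p₀ n ↔ x.1.length = n ∧ IsRun T p₀ x.1 x.2 := by
  obtain ⟨α, qs⟩ := x
  simp only [runsAll, Finset.mem_biUnion, Finset.mem_image]
  constructor
  · rintro ⟨β, hβ, u, hu, heq⟩
    obtain ⟨rfl, rfl⟩ := Prod.mk.injEq .. ▸ heq
    exact ⟨(mem_allWords n β).mp hβ, (mem_runsF T β p₀ u).mp hu⟩
  · rintro ⟨h1, h2⟩
    exact ⟨α, (mem_allWords n α).mpr h1, qs, (mem_runsF T α p₀ qs).mpr h2, rfl⟩

/-- Words of length `n` admitting a run. -/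
noncomputable def goodWords (T : Set (Q × A × Q)) (p₀ : Q) (n : ℕ) : Finset (List A) :=
  (allWords A n).filter fun α => (runsF T p₀ α).Nonempty

lemma natCard_eq_finset_card {β : Type*} (P : β → Prop) (s : Finset β)
    (h : ∀ x, P x ↔ x ∈ s) : Nat.card {x // P x} = s.card := by
  rw [Nat.card_congr (Equiv.subtypeEquivRight h), Nat.card_eq_fintype_card, Fintype.card_coe]

lemma fcount_eq (T : Set (Q × A × Q)) (p₀ : Q) (n : ℕ) :
    fcount T p₀ n = (runsAll T p₀ n).card :=
  natCard_eq_finset_card _ _ fun x => (mem_runsAll T p₀ n x).symm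

lemma gcount_eq (T : Set (Q × A × Q)) (p₀ : Q) (n : ℕ) :
    gcount T p₀ n = (goodWords T p₀ n).card := by
  refine natCard_eq_finset_card _ _ fun α => ?_
  rw [goodWords, Finset.mem_filter, mem_allWords]
  constructor
  · rintro ⟨h1, qs, h2⟩; exact ⟨h1, qs, (mem_runsF T α p₀ qs).mpr h2⟩
  · rintro ⟨h1, qs, h2⟩; exact ⟨h1, qs, (mem_runsF T α p₀ qs).mp h2⟩

lemma Esum_eq (T : Set (Q × A × Q)) (p₀ : Q) (n : ℕ) :
    Esum T p₀ n = ∑ x ∈ runsAll T p₀ n, runV T p₀ x.1 x.2 := by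
  rw [Esum]
  rw [← Equiv.tsum_eq (Equiv.subtypeEquivRight fun x => (mem_runsAll T p₀ n x).symm).symm
    (fun x => runV T p₀ x.1.1 x.1.2)]
  rw [tsum_fintype]
  exact Finset.sum_coe_sort (runsAll T p₀ n) (fun x => runV T p₀ x.1 x.2)

end Aux

/-- `E(n) · g(n) ≥ f(n)²`. -/
theorem stmt11 {Q A : Type*} [Fintype Q] [Fintype A]
    (T : Set (Q × A × Q)) (p₀ : Q) (n : ℕ) :
    ((fcount T p₀ n : ℝ)) ^ 2 ≤ Esum T p₀ n * (gcount T p₀ n : ℝ) := by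
  classical
  set G := goodWords T p₀ n with hG
  have hGsub : G ⊆ allWords A n := Finset.filter_subset _ _
  -- f as a sum over good words
  have hf : (fcount T p₀ n : ℝ) = ∑ α ∈ G, ((runsF T p₀ α).card : ℝ) := by
    rw [fcount_eq, runsAll, Finset.card_biUnion (runsAll_disj T p₀ n)]
    push_cast
    rw [← Finset.sum_subset hGsub]
    · refine Finset.sum_congr rfl fun α _ => ?_
      rw [Finset.card_image_of_injective _ (fun u v h => (Prod.mk.injEq .. ▸ h).2)]
    · intro α _ hα
      have : runsF T p₀ α = ∅ := by
        by_contra hne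
        exact hα (Finset.mem_filter.mpr ⟨‹α ∈ allWords A n›, Finset.nonempty_iff_ne_empty.mpr hne⟩)
      simp [this]
  -- E as a sum over good words
  have hE : Esum T p₀ n = ∑ α ∈ G, ∑ qs ∈ runsF T p₀ α, runV T p₀ α qs := by
    rw [Esum_eq, runsAll, Finset.sum_biUnion (runsAll_disj T p₀ n)]
    rw [← Finset.sum_subset hGsub]
    · refine Finset.sum_congr rfl fun α _ => ?_
      rw [Finset.sum_image (fun u _ v _ h => (Prod.mk.injEq .. ▸ h).2)]
    · intro α _ hα
      have : runsF T p₀ α = ∅ := by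
        by_contra hne
        exact hα (Finset.mem_filter.mpr ⟨‹α ∈ allWords A n›, Finset.nonempty_iff_ne_empty.mpr hne⟩)
      simp [this]
  rw [hf, hE, gcount_eq, mul_comm]
  calc (∑ α ∈ G, ((runsF T p₀ α).card : ℝ)) ^ 2
      ≤ (G.card : ℝ) * ∑ α ∈ G, ((runsF T p₀ α).card : ℝ) ^ 2 := by
        exact_mod_cast sq_sum_le_card_mul_sum_sq
    _ ≤ (G.card : ℝ) * ∑ α ∈ G, ∑ qs ∈ runsF T p₀ α, runV T p₀ α qs := by
        exact mul_le_mul_of_nonneg_left (Finset.sum_le_sum fun α _ => key T α p₀) (by positivity)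
end

section
/- Let L ⊆ Σ* be a prefix-closed language recognized by a DFA M in which every state is accepting and every state both is reachable from the initial state and lies on some accepting run extension, and let U be a cost function implemented by a cost function V on M's transitions (so that for each w ∈ L of length ≥ 2 the unique accepting run τ of w satisfies (U)(w) = (V)(τ)). If M is strongly connected, then the limit lim_{n→∞} (1/n)·ln Σ_{w∈L, |w|=n} e^{(U)(w)} exists (not just the limsup). -/
open Filter

/-- Total cost of a run: sum of the transition costs `V p a q` along the run. -/
noncomputable def runCost {Q A : Type*} (V : Q → A → Q → ℝ) : Q → List A → List Q → ℝ
  | _, [], [] => 0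
  | p, a :: α, q :: qs => V p a q + runCost V q α qs
  | _, _, _ => 0

/-- Total cost of a word: sum of `U` over adjacent pairs of symbols. -/
noncomputable def wordCost {σ : Type*} (U : σ → σ → ℝ) : List σ → ℝ
  | [] => 0
  | [_] => 0
  | a :: b :: rest => U a b + wordCost U (b :: rest)

namespace Stmt16

variable {Q A : Type*} {T : Set (Q × A × Q)} {V : Q → A → Q → ℝ}

/-- last state of a run starting at `p` with state sequence `qs`. -/
def endSt (p : Q) (qs : List Q) : Q := (p :: qs).getLast (List.cons_ne_nil _ _)

@[simp] lemma endSt_nil (p : Q) : endSt p ([] : List Q) = p := rfl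

@[simp] lemma endSt_cons (p q : Q) (qs : List Q) : endSt p (q :: qs) = endSt q qs := by
  cases qs <;> rfl

lemma endSt_append (p : Q) (qs rs : List Q) :
    endSt p (qs ++ rs) = endSt (endSt p qs) rs := by
  induction qs generalizing p with
  | nil => simp
  | cons q qs ih => simp [ih]

@[simp] lemma isRun_nil (p : Q) : IsRun T p [] [] := trivial

lemma isRun_length {p : Q} {α : List A} {qs : List Q} (h : IsRun T p α qs) :
    qs.length = α.length := by
  induction α generalizing p qs with
  | nil => cases qs with
    | nil => rfl
    | cons q qs => exact absurd h (by simp [IsRun])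
  | cons a α ih =>
    cases qs with
    | nil => exact absurd h (by simp [IsRun])
    | cons q qs => simpa using ih h.2

lemma isRun_append {p : Q} {α β : List A} {qs rs : List Q}
    (h1 : IsRun T p α qs) (h2 : IsRun T (endSt p qs) β rs) :
    IsRun T p (α ++ β) (qs ++ rs) := by
  induction α generalizing p qs with
  | nil =>
    cases qs with
    | nil => simpa using h2
    | cons q qs => exact absurd h1 (by simp [IsRun])
  | cons a α ih =>
    cases qs with
    | nil => exact absurd h1 (by simp [IsRun])
    | cons q qs =>
      refine ⟨h1.1, ih h1.2 ?_⟩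
      simpa using h2

lemma isRun_take {p : Q} {α : List A} {qs : List Q} (h : IsRun T p α qs) (n : ℕ) :
    IsRun T p (α.take n) (qs.take n) := by
  induction n generalizing p α qs with
  | zero => simp
  | succ n ih =>
    cases α with
    | nil => cases qs with
      | nil => simp
      | cons q qs => exact absurd h (by simp [IsRun])
    | cons a α =>
      cases qs with
      | nil => exact absurd h (by simp [IsRun])
      | cons q qs => exact ⟨h.1, ih h.2⟩

lemma isRun_drop {p : Q} {α : List A} {qs : List Q} (h : IsRun T p α qs) (n : ℕ) :
    IsRun T (endSt p (qs.take n)) (α.drop n) (qs.drop n) := by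
  induction n generalizing p α qs with
  | zero => simpa using h
  | succ n ih =>
    cases α with
    | nil => cases qs with
      | nil => simp
      | cons q qs => exact absurd h (by simp [IsRun])
    | cons a α =>
      cases qs with
      | nil => exact absurd h (by simp [IsRun])
      | cons q qs => simpa using ih h.2

lemma isRun_det (hdet : ∀ p a (q q' : Q), (p, a, q) ∈ T → (p, a, q') ∈ T → q = q')
    {p : Q} {α : List A} {qs qs' : List Q}
    (h : IsRun T p α qs) (h' : IsRun T p α qs') : qs = qs' := by
  induction α generalizing p qs qs' with
  | nil =>
    cases qs with
    | nil => cases qs' with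
      | nil => rfl
      | cons q qs' => exact absurd h' (by simp [IsRun])
    | cons q qs => exact absurd h (by simp [IsRun])
  | cons a α ih =>
    cases qs with
    | nil => exact absurd h (by simp [IsRun])
    | cons q qs =>
      cases qs' with
      | nil => exact absurd h' (by simp [IsRun])
      | cons q' qs' =>
        obtain rfl : q = q' := hdet _ _ _ _ h.1 h'.1
        rw [ih h.2 h'.2]

lemma runCost_append {p : Q} {α β : List A} {qs rs : List Q}
    (h : qs.length = α.length) :
    runCost V p (α ++ β) (qs ++ rs) = runCost V p α qs + runCost V (endSt p qs) β rs := by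
  induction α generalizing p qs with
  | nil =>
    cases qs with
    | nil => simp [runCost]
    | cons q qs => simp at h
  | cons a α ih =>
    cases qs with
    | nil => simp at h
    | cons q qs =>
      simp only [List.cons_append, runCost, endSt_cons, List.append_eq]
      rw [ih (by simpa using h)]
      ring

lemma abs_runCost_le {CV : ℝ} (hCV : ∀ p a q, |V p a q| ≤ CV)
    {p : Q} {α : List A} {qs : List Q} (h : qs.length = α.length) :
    |runCost V p α qs| ≤ CV * α.length := by
  induction α generalizing p qs with
  | nil =>
    cases qs with
    | nil => simp [runCost]
    | cons q qs => simp at h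
  | cons a α ih =>
    cases qs with
    | nil => simp at h
    | cons q qs =>
      have h1 := ih (p := q) (qs := qs) (by simpa using h)
      calc |runCost V p (a :: α) (q :: qs)| ≤ |V p a q| + |runCost V q α qs| := abs_add_le _ _
        _ ≤ CV + CV * α.length := add_le_add (hCV _ _ _) h1
        _ = CV * (α.length + 1) := by ring
        _ = CV * (a :: α).length := by simp

-- helper: sum comparison along an injection
lemma sum_le_sum_inj {α β : Type*} [DecidableEq β] {s : Finset α} {t : Finset β} (f : α → β)
    (hinj : ∀ x ∈ s, ∀ y ∈ s, f x = f y → x = y) (hmap : ∀ x ∈ s, f x ∈ t)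
    {F : α → ℝ} {G : β → ℝ} (hG : ∀ b ∈ t, 0 ≤ G b) (hFG : ∀ x ∈ s, F x ≤ G (f x)) :
    ∑ x ∈ s, F x ≤ ∑ b ∈ t, G b := by
  calc ∑ x ∈ s, F x ≤ ∑ x ∈ s, G (f x) := Finset.sum_le_sum hFG
    _ = ∑ b ∈ s.image f, G b := (Finset.sum_image hinj).symm
    _ ≤ ∑ b ∈ t, G b := by
        apply Finset.sum_le_sum_of_subset_of_nonneg
        · intro b hb
          obtain ⟨x, hx, rfl⟩ := Finset.mem_image.1 hb
          exact hmap x hx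
        · exact fun b hb _ => hG b hb

open Classical in
/-- the canonical run of a word from `init`, if any. -/
noncomputable def runOf {Q A : Type*} (T : Set (Q × A × Q)) (init : Q) (w : List A) :
    List Q :=
  if h : ∃ qs, IsRun T init w qs then h.choose else []

lemma isRun_runOf {Q A : Type*} {T : Set (Q × A × Q)} {init : Q} {w : List A} {qs : List Q}
    (h : IsRun T init w qs) : IsRun T init w (runOf T init w) := by
  have hex : ∃ qs, IsRun T init w qs := ⟨qs, h⟩
  unfold runOf
  rw [dif_pos hex]
  exact hex.choose_spec

lemma runOf_eq {Q A : Type*} {T : Set (Q × A × Q)} {init : Q}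
    (hdet : ∀ p a (q q' : Q), (p, a, q) ∈ T → (p, a, q') ∈ T → q = q')
    {w : List A} {qs : List Q} (h : IsRun T init w qs) : runOf T init w = qs :=
  isRun_det hdet (isRun_runOf h) h

end Stmt16

open Stmt16 in
set_option maxHeartbeats 1000000 in
/-- for a prefix-closed language `L` recognized by a strongly connected,
cleaned-up DFA all of whose states are accepting, and a cost `U` implemented by transition
costs `V`, the limit (not merely the limsup) defining the free energy G_U(L) exists. -/
theorem stmt16 {Q A : Type*} [Fintype Q] [Fintype A]
    (T : Set (Q × A × Q)) (init : Q) (V : Q → A → Q → ℝ)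
    (U : A → A → ℝ) (L : Set (List A))
    (hdet : ∀ p a q q', (p, a, q) ∈ T → (p, a, q') ∈ T → q = q')
    (hL : L = {α : List A | ∃ qs, IsRun T init α qs})
    (hreach : ∀ q : Q, ∃ (α : List A) (qs : List Q),
        IsRun T init α qs ∧ (init :: qs).getLast (List.cons_ne_nil _ _) = q)
    (hsc : ∀ p q : Q, ∃ (α : List A) (qs : List Q),
        IsRun T p α qs ∧ (p :: qs).getLast (List.cons_ne_nil _ _) = q)
    (himpl : ∀ (α : List A) (qs : List Q), IsRun T init α qs → 2 ≤ α.length →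
        wordCost U α = runCost V init α qs) :
    ∃ ℓ : ℝ, Tendsto (fun n : ℕ =>
        (1 / (n : ℝ)) * Real.log
          (∑' w : {w : List A // w ∈ L ∧ w.length = n}, Real.exp (wordCost U w.1)))
      atTop (nhds ℓ) := by
  classical
  subst hL
  by_cases hT : ∃ x, x ∈ T
  swap
  · -- degenerate case : no transition at all, the language is {[]}
    refine ⟨0, ?_⟩
    have hzero : ∀ n : ℕ, 1 ≤ n →
        (1 / (n : ℝ)) * Real.log
          (∑' w : {w : List A // w ∈ {α : List A | ∃ qs, IsRun T init α qs} ∧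
              w.length = n}, Real.exp (wordCost U w.1)) = 0 := by
      intro n hn
      haveI : IsEmpty {w : List A // w ∈ {α : List A | ∃ qs, IsRun T init α qs} ∧
          w.length = n} := by
        constructor
        rintro ⟨w, hw, hlen⟩
        obtain ⟨qs, hqs⟩ := hw
        cases w with
        | nil => simp at hlen; omega
        | cons a α =>
          cases qs with
          | nil => exact absurd hqs (by simp [IsRun])
          | cons q qs => exact hT ⟨_, hqs.1⟩
      rw [tsum_empty, Real.log_zero, mul_zero]
    refine Tendsto.congr' ?_ tendsto_const_nhds
    filter_upwards [eventually_ge_atTop 1] with n hn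
    exact (hzero n hn).symm
  -- main case
  obtain ⟨⟨p0, a0, q0⟩, hT⟩ := hT
  haveI : Nonempty A := ⟨a0⟩
  haveI : Nonempty Q := ⟨init⟩
  -- every state has an outgoing transition
  have step : ∀ p : Q, ∃ a q, (p, a, q) ∈ T := by
    intro p
    by_cases hq : ∀ q : Q, q = p
    · exact ⟨a0, q0, (hq p0) ▸ hT⟩
    · push_neg at hq
      obtain ⟨q, hqp⟩ := hq
      obtain ⟨α, qs, hrun, hend⟩ := hsc p q
      cases α with
      | nil =>
        cases qs with
        | nil => exact absurd (hend : endSt p ([] : List Q) = q) (by simpa using hqp.symm)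
        | cons r rs => exact absurd hrun (by simp [IsRun])
      | cons a α =>
        cases qs with
        | nil => exact absurd hrun (by simp [IsRun])
        | cons r rs => exact ⟨a, r, hrun.1⟩
  choose sa sq hstep using step
  -- greedy extension words of arbitrary length
  have hext : ∀ (n : ℕ) (p : Q), ∃ α qs, IsRun T p α qs ∧ α.length = n := by
    intro n
    induction n with
    | zero => exact fun p => ⟨[], [], trivial, rfl⟩
    | succ n ih =>
      intro p
      obtain ⟨α, qs, h1, h2⟩ := ih (sq p)
      exact ⟨sa p :: α, sq p :: qs, ⟨hstep p, h1⟩, by simp [h2]⟩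
  choose eW eR heRun heWlen using hext
  -- connecting paths back to init
  have hconn : ∀ p : Q, ∃ α qs, IsRun T p α qs ∧ endSt p qs = init := by
    intro p
    obtain ⟨α, qs, h1, h2⟩ := hsc p init
    exact ⟨α, qs, h1, h2⟩
  choose cW cR hcRun hcEnd using hconn
  set K : ℕ := (Finset.univ.sup fun p : Q => (cW p).length) + 1 with hKdef
  have hKc : ∀ p, (cW p).length + 1 ≤ K :=
    fun p => Nat.succ_le_succ (Finset.le_sup (f := fun p : Q => (cW p).length) (Finset.mem_univ p))
  have hK1 : 1 ≤ K := Nat.le_add_left 1 _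
  -- bound on transition costs
  obtain ⟨CV0, hCV0⟩ := Finite.exists_le (fun x : Q × A × Q => |V x.1 x.2.1 x.2.2|)
  set CV : ℝ := max CV0 0 with hCVdef
  have hCV : ∀ p a q, |V p a q| ≤ CV := fun p a q => le_trans (hCV0 (p, a, q)) (le_max_left _ _)
  have hCVpos : 0 ≤ CV := le_max_right _ _
  -- the finite sets of words of given length
  have hWfin : ∀ n : ℕ, {w : List A | (∃ qs, IsRun T init w qs) ∧ w.length = n}.Finite :=
    fun n => (List.finite_length_eq A n).subset fun w hw => hw.2
  set W : ℕ → Finset (List A) := fun n => (hWfin n).toFinset with hWdef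
  have hWmem : ∀ {n : ℕ} {w : List A},
      w ∈ W n ↔ (∃ qs, IsRun T init w qs) ∧ w.length = n := by
    intro n w
    simp [hWdef, Set.Finite.mem_toFinset]
  set Z : ℕ → ℝ := fun n => ∑ w ∈ W n, Real.exp (wordCost U w) with hZdef
  -- identification of the tsum
  have hZts : ∀ n : ℕ,
      (∑' w : {w : List A // (∃ qs, IsRun T init w qs) ∧
          w.length = n}, Real.exp (wordCost U w.1)) = Z n := by
    intro n
    haveI : Fintype {w : List A // (∃ qs, IsRun T init w qs) ∧
        w.length = n} := Set.Finite.fintype (hWfin n)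
    rw [tsum_fintype]
    exact (Finset.sum_subtype (W n) (fun w => hWmem) fun w => Real.exp (wordCost U w)).symm
  -- positivity
  have hZpos : ∀ n : ℕ, 0 < Z n := by
    intro n
    apply Finset.sum_pos (fun _ _ => Real.exp_pos _)
    exact ⟨eW n init, hWmem.2 ⟨⟨eR n init, heRun n init⟩, heWlen n init⟩⟩

  -- end-state function
  set es : List A → Q := fun w => endSt init (runOf T init w) with hesdef
  -- ===== supermultiplicativity =====
  have key : ∀ m n : ℕ, 2 ≤ m → 2 ≤ n →
      Z m * Z n ≤ Real.exp (2 * CV * K) * Z (m + n + K) := by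
    intro m n hm hn
    have master : ∀ x : List A × List A, x ∈ W m ×ˢ W n →
        ((x.1 ++ cW (es x.1) ++ x.2) ++
          eW (K - (cW (es x.1)).length) (es (x.1 ++ cW (es x.1) ++ x.2))) ∈ W (m + n + K) ∧
        wordCost U x.1 + wordCost U x.2 ≤ 2 * CV * K +
          wordCost U ((x.1 ++ cW (es x.1) ++ x.2) ++
            eW (K - (cW (es x.1)).length) (es (x.1 ++ cW (es x.1) ++ x.2))) := by
      rintro ⟨w1, w2⟩ hx
      dsimp only at hx ⊢
      rw [Finset.mem_product] at hx
      obtain ⟨hw1, hw2⟩ := hx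
      have hw1 : w1 ∈ W m := hw1
      have hw2 : w2 ∈ W n := hw2
      obtain ⟨⟨r1', hr1'⟩, hlen1⟩ := hWmem.1 hw1
      obtain ⟨⟨r2', hr2'⟩, hlen2⟩ := hWmem.1 hw2
      have hr1 : IsRun T init w1 (runOf T init w1) := isRun_runOf hr1'
      have hr2 : IsRun T init w2 (runOf T init w2) := isRun_runOf hr2'
      set r1 := runOf T init w1 with hr1def
      set r2 := runOf T init w2 with hr2def
      set p := es w1 with hpdef
      have hep : endSt init r1 = p := rfl
      set v := w1 ++ cW p ++ w2 with hvdef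
      set rv := r1 ++ cR p ++ r2 with hrvdef
      have hrv : IsRun T init v rv := by
        apply isRun_append
        · apply isRun_append hr1
          rw [hep]; exact hcRun p
        · rw [endSt_append, hep, hcEnd p]; exact hr2
      set q := es v with hqdef
      have hq : endSt init rv = q := by
        rw [← runOf_eq hdet hrv]
      set k := K - (cW p).length with hkdef
      have hkK : (cW p).length + k = K := by
        have := hKc p; omega
      set R := rv ++ eR k q with hRdef
      have hR : IsRun T init (v ++ eW k q) R := by
        apply isRun_append hrv
        rw [hq]
        exact heRun k q
      have hlenv : v.length = m + (cW p).length + n := by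
        simp only [hvdef, List.length_append, hlen1, hlen2]
      have hlenΦ : (v ++ eW k q).length = m + n + K := by
        simp only [List.length_append, hlenv, heWlen]
        omega
      constructor
      · exact hWmem.2 ⟨⟨R, hR⟩, hlenΦ⟩
      · -- cost estimate
        have hlr1 : r1.length = w1.length := isRun_length hr1
        have hlr2 : r2.length = w2.length := isRun_length hr2
        have hlcR : (cR p).length = (cW p).length := isRun_length (hcRun p)
        have hleR : (eR k q).length = (eW k q).length := isRun_length (heRun k q)
        have hcost : wordCost U (v ++ eW k q) = runCost V init (v ++ eW k q) R :=
          himpl _ _ hR (by rw [hlenΦ]; omega)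
        have hsplit : runCost V init (v ++ eW k q) R =
            runCost V init w1 r1 + runCost V p (cW p) (cR p) + runCost V init w2 r2 +
              runCost V q (eW k q) (eR k q) := by
          rw [hRdef, runCost_append (by rw [isRun_length hrv]), hq, hrvdef, hvdef,
            runCost_append (by simp [List.length_append, hlr1, hlcR]),
            endSt_append, hep, hcEnd p,
            runCost_append hlr1, hep]
        have hc1 : wordCost U w1 = runCost V init w1 r1 :=
          himpl _ _ hr1 (by omega)
        have hc2 : wordCost U w2 = runCost V init w2 r2 :=
          himpl _ _ hr2 (by omega)
        have hj1 : |runCost V p (cW p) (cR p)| ≤ CV * (cW p).length :=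
          abs_runCost_le hCV hlcR
        have hj2 : |runCost V q (eW k q) (eR k q)| ≤ CV * (eW k q).length :=
          abs_runCost_le hCV hleR
        have hklen : ((cW p).length : ℝ) + ((eW k q).length : ℝ) = (K : ℝ) := by
          rw [heWlen]
          exact_mod_cast congrArg (Nat.cast (R := ℝ)) hkK
        have hCVK : 0 ≤ CV * (K : ℝ) := by positivity
        have e1 := neg_abs_le (runCost V p (cW p) (cR p))
        have e2 := neg_abs_le (runCost V q (eW k q) (eR k q))
        rw [hcost, hsplit, hc1, hc2]
        nlinarith [hj1, hj2]
    have hinj : ∀ x ∈ W m ×ˢ W n, ∀ y ∈ W m ×ˢ W n,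
        ((x.1 ++ cW (es x.1) ++ x.2) ++
          eW (K - (cW (es x.1)).length) (es (x.1 ++ cW (es x.1) ++ x.2))) =
        ((y.1 ++ cW (es y.1) ++ y.2) ++
          eW (K - (cW (es y.1)).length) (es (y.1 ++ cW (es y.1) ++ y.2))) → x = y := by
      rintro ⟨w1, w2⟩ hx ⟨w1', w2'⟩ hy heq
      dsimp only at hx hy heq ⊢
      rw [Finset.mem_product] at hx hy
      have hlen1 : w1.length = m := (hWmem.1 hx.1).2
      have hlen2 : w2.length = n := (hWmem.1 hx.2).2
      have hlen1' : w1'.length = m := (hWmem.1 hy.1).2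
      have hlen2' : w2'.length = n := (hWmem.1 hy.2).2
      have e1 : ∀ (u1 u2 : List A), u1.length = m →
          (((u1 ++ cW (es u1) ++ u2) ++
            eW (K - (cW (es u1)).length) (es (u1 ++ cW (es u1) ++ u2)))).take m = u1 := by
        intro u1 u2 hu
        rw [List.append_assoc, List.append_assoc, List.take_left' hu]
      have h1 : w1 = w1' := by
        rw [← e1 w1 w2 hlen1, ← e1 w1' w2' hlen1', heq]
      subst h1
      have e2 : ∀ (u2 : List A), u2.length = n →
          ((((w1 ++ cW (es w1) ++ u2) ++
            eW (K - (cW (es w1)).length) (es (w1 ++ cW (es w1) ++ u2)))).drop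
              (m + (cW (es w1)).length)).take n = u2 := by
        intro u2 hu2
        rw [List.append_assoc (w1 ++ cW (es w1)) u2 _,
          List.drop_left' (by simp [List.length_append, hlen1]),
          List.take_left' hu2]
      have h2 : w2 = w2' := by
        rw [← e2 w2 hlen2, ← e2 w2' hlen2', heq]
      rw [h2]
    -- assemble
    have hprod : Z m * Z n = ∑ x ∈ W m ×ˢ W n,
        Real.exp (wordCost U x.1) * Real.exp (wordCost U x.2) := by
      rw [Finset.sum_product]
      exact Finset.sum_mul_sum _ _ _ _
    have hrhs : Real.exp (2 * CV * K) * Z (m + n + K) =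
        ∑ w ∈ W (m + n + K), Real.exp (2 * CV * K) * Real.exp (wordCost U w) := by
      simp only [hZdef]
      rw [Finset.mul_sum]
    rw [hprod, hrhs]
    apply sum_le_sum_inj (fun x : List A × List A =>
        (x.1 ++ cW (es x.1) ++ x.2) ++
          eW (K - (cW (es x.1)).length) (es (x.1 ++ cW (es x.1) ++ x.2)))
      hinj (fun x hx => (master x hx).1)
      (fun b _ => by positivity)
    intro x hx
    rw [← Real.exp_add, ← Real.exp_add]
    exact Real.exp_le_exp.2 (master x hx).2
  -- ===== one-step upper bound =====
  set B : ℝ := (Fintype.card A : ℝ) * Real.exp CV with hBdef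
  have hcardA : (1 : ℝ) ≤ (Fintype.card A : ℝ) := by
    exact_mod_cast Fintype.card_pos
  have hB1 : 1 ≤ B := by
    rw [hBdef]
    nlinarith [Real.one_le_exp hCVpos]
  have hB0 : 0 < B := lt_of_lt_of_le one_pos hB1
  have hstepup : ∀ n : ℕ, 2 ≤ n → Z (n + 1) ≤ B * Z n := by
    intro n hn
    have hrhs : B * Z n = ∑ x ∈ W n ×ˢ (Finset.univ : Finset A),
        Real.exp (wordCost U x.1 + CV) := by
      rw [Finset.sum_product]
      simp only [Real.exp_add, Finset.sum_const, Finset.card_univ, nsmul_eq_mul, hBdef, hZdef]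
      simp only [Finset.mul_sum]
      apply Finset.sum_congr rfl
      intro w _
      ring
    rw [hrhs]
    apply sum_le_sum_inj (fun w : List A => (w.take n, w.getD n a0))
    · -- injectivity
      intro w hw w' hw' heq
      have hlw : w.length = n + 1 := (hWmem.1 hw).2
      have hlw' : w'.length = n + 1 := (hWmem.1 hw').2
      have hdec : ∀ u : List A, u.length = n + 1 → u = u.take n ++ [u.getD n a0] := by
        intro u hu
        conv_lhs => rw [← List.take_append_drop n u]
        congr 1
        rw [List.drop_eq_getElem_cons (by omega), List.drop_eq_nil_of_le (by omega),
          List.getD_eq_getElem u a0 (by omega)]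
      have h1 : w.take n = w'.take n := congrArg Prod.fst heq
      have h2 : w.getD n a0 = w'.getD n a0 := congrArg Prod.snd heq
      rw [hdec w hlw, hdec w' hlw', h1, h2]
    · -- maps into
      intro w hw
      obtain ⟨⟨r, hr⟩, hlw⟩ := hWmem.1 hw
      rw [Finset.mem_product]
      refine ⟨hWmem.2 ⟨⟨r.take n, isRun_take hr n⟩, ?_⟩, Finset.mem_univ _⟩
      rw [List.length_take]
      omega
    · exact fun b _ => le_of_lt (Real.exp_pos _)
    · -- cost bound
      intro w hw
      obtain ⟨⟨r', hr'⟩, hlw⟩ := hWmem.1 hw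
      have hr : IsRun T init w (runOf T init w) := isRun_runOf hr'
      set r := runOf T init w with hrdef
      have hlr : r.length = w.length := isRun_length hr
      have hcw : wordCost U w = runCost V init w r := himpl _ _ hr (by omega)
      have hsplit : runCost V init w r =
          runCost V init (w.take n) (r.take n) +
            runCost V (endSt init (r.take n)) (w.drop n) (r.drop n) := by
        conv_lhs => rw [← List.take_append_drop n w, ← List.take_append_drop n r]
        rw [runCost_append (by rw [List.length_take, List.length_take, hlr])]
      have hc1 : wordCost U (w.take n) = runCost V init (w.take n) (r.take n) :=
        himpl _ _ (isRun_take hr n) (by rw [List.length_take]; omega)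
      have hj : |runCost V (endSt init (r.take n)) (w.drop n) (r.drop n)| ≤
          CV * (w.drop n).length := by
        apply abs_runCost_le hCV
        rw [List.length_drop, List.length_drop, hlr]
      have hdlen : ((w.drop n).length : ℝ) = 1 := by
        rw [List.length_drop, hlw]
        norm_num
      rw [hdlen] at hj
      have := le_abs_self (runCost V (endSt init (r.take n)) (w.drop n) (r.drop n))
      apply Real.exp_le_exp.2
      dsimp only
      rw [hcw, hsplit, hc1]
      linarith
  -- iterated upper bound on log scale
  set a : ℕ → ℝ := fun n => Real.log (Z n) with hadef
  have hS : ∀ m n : ℕ, 2 ≤ m → 2 ≤ n → a m + a n ≤ 2 * CV * K + a (m + n + K) := by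
    intro m n hm hn
    have h := Real.log_le_log (mul_pos (hZpos m) (hZpos n)) (key m n hm hn)
    rw [Real.log_mul (ne_of_gt (hZpos m)) (ne_of_gt (hZpos n)),
      Real.log_mul (ne_of_gt (Real.exp_pos _)) (ne_of_gt (hZpos _)), Real.log_exp] at h
    exact h
  have hU : ∀ n : ℕ, 2 ≤ n → ∀ j : ℕ, a (n + j) ≤ j * Real.log B + a n := by
    intro n hn j
    induction j with
    | zero => simp
    | succ j ih =>
      have h1 : Z (n + j + 1) ≤ B * Z (n + j) := hstepup (n + j) (by omega)
      have h2 : a (n + j + 1) ≤ Real.log B + a (n + j) := by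
        have := Real.log_le_log (hZpos _) h1
        rw [Real.log_mul (ne_of_gt hB0) (ne_of_gt (hZpos _))] at this
        exact this
      have : n + (j + 1) = n + j + 1 := by omega
      rw [this]
      push_cast
      linarith
  have hlogB : 0 ≤ Real.log B := Real.log_nonneg hB1
  set D : ℝ := 2 * CV * K + 2 * K * Real.log B with hDdef
  set u : ℕ → ℝ := fun n => if n = 0 then 0 else D - a (n + K) with hudef
  have hsub : Subadditive u := by
    intro m n
    rcases Nat.eq_zero_or_pos m with hm | hm
    · subst hm; simp [hudef]
    rcases Nat.eq_zero_or_pos n with hn | hn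
    · subst hn; simp [hudef]
    have hmn : m + n ≠ 0 := by omega
    simp only [hudef, if_neg hmn, if_neg (by omega : m ≠ 0), if_neg (by omega : n ≠ 0)]
    have h1 : a (m + K) + a (n + K) ≤ 2 * CV * K + a ((m + K) + (n + K) + K) :=
      hS (m + K) (n + K) (by omega) (by omega)
    have h2 : (m + K) + (n + K) + K = (m + n + K) + 2 * K := by omega
    rw [h2] at h1
    have h3 : a ((m + n + K) + 2 * K) ≤ ((2 * K : ℕ) : ℝ) * Real.log B + a (m + n + K) :=
      hU (m + n + K) (by omega) (2 * K)
    rw [Nat.cast_mul, Nat.cast_ofNat] at h3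
    rw [hDdef]
    linarith
  have hbdd : BddBelow (Set.range fun n : ℕ => u n / n) := by
    refine ⟨-(|D - a 2| + ((K : ℝ) + 1) * Real.log B), ?_⟩
    rintro x ⟨n, rfl⟩
    rcases Nat.eq_zero_or_pos n with hn | hn
    · subst hn
      simp only [hudef, if_pos rfl, Nat.cast_zero, div_zero]
      have : 0 ≤ ((K : ℝ) + 1) * Real.log B := by positivity
      have := abs_nonneg (D - a 2)
      linarith
    have hn0 : n ≠ 0 := by omega
    have hnpos : (0 : ℝ) < n := by exact_mod_cast hn
    have hn1 : (1 : ℝ) ≤ n := by exact_mod_cast hn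
    have hidx : 2 + (n + K - 2) = n + K := by omega
    have h1 : a (n + K) ≤ ((n + K - 2 : ℕ) : ℝ) * Real.log B + a 2 := by
      have := hU 2 le_rfl (n + K - 2)
      rwa [hidx] at this
    have h2 : ((n + K - 2 : ℕ) : ℝ) ≤ (n : ℝ) * ((K : ℝ) + 1) := by
      have hnat : n + K - 2 ≤ n * (K + 1) := by
        calc n + K - 2 ≤ n + K := Nat.sub_le _ _
          _ ≤ n * (K + 1) := by nlinarith
      calc ((n + K - 2 : ℕ) : ℝ) ≤ ((n * (K + 1) : ℕ) : ℝ) := Nat.cast_le.2 hnat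
        _ = (n : ℝ) * ((K : ℝ) + 1) := by rw [Nat.cast_mul, Nat.cast_add, Nat.cast_one]
    have h3 : a (n + K) ≤ (n : ℝ) * ((K : ℝ) + 1) * Real.log B + a 2 := by
      nlinarith [mul_le_mul_of_nonneg_right h2 hlogB]
    simp only [hudef, if_neg hn0]
    rw [le_div_iff₀ hnpos]
    have habs := neg_abs_le (D - a 2)
    have habs' := abs_nonneg (D - a 2)
    nlinarith [mul_nonneg (mul_nonneg (le_of_lt hnpos) (by positivity : (0:ℝ) ≤ (K:ℝ)+1)) hlogB]
  -- ===== Fekete and conclusion =====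
  have hfek := hsub.tendsto_lim hbdd
  refine ⟨-hsub.lim, ?_⟩
  have h1 : Tendsto (fun n : ℕ => u (n - K) / ((n - K : ℕ) : ℝ)) atTop (nhds hsub.lim) :=
    hfek.comp (Filter.tendsto_sub_atTop_nat K)
  have h2 : Tendsto (fun n : ℕ => ((n - K : ℕ) : ℝ) / n) atTop (nhds 1) := by
    have hev : (fun n : ℕ => 1 - (K : ℝ) / n) =ᶠ[atTop]
        (fun n : ℕ => ((n - K : ℕ) : ℝ) / n) := by
      filter_upwards [eventually_ge_atTop (K + 1)] with n hn
      have hn0 : (n : ℝ) ≠ 0 := Nat.cast_ne_zero.2 (by omega)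
      rw [Nat.cast_sub (by omega), sub_div, div_self hn0]
    have : Tendsto (fun n : ℕ => 1 - (K : ℝ) / n) atTop (nhds (1 - 0)) :=
      tendsto_const_nhds.sub (tendsto_const_div_atTop_nhds_zero_nat (K : ℝ))
    rw [sub_zero] at this
    exact this.congr' hev
  have h3 : Tendsto (fun n : ℕ => D / n) atTop (nhds 0) :=
    tendsto_const_div_atTop_nhds_zero_nat D
  have h4 : Tendsto (fun n : ℕ =>
      D / n - (u (n - K) / ((n - K : ℕ) : ℝ)) * (((n - K : ℕ) : ℝ) / n)) atTop
      (nhds (0 - hsub.lim * 1)) := h3.sub (h1.mul h2)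
  rw [show (0 : ℝ) - hsub.lim * 1 = -hsub.lim by ring] at h4
  apply Tendsto.congr' ?_ h4
  filter_upwards [eventually_ge_atTop (K + 1)] with n hn
  have hn0 : (n : ℝ) ≠ 0 := Nat.cast_ne_zero.2 (by omega)
  have hnK0 : ((n - K : ℕ) : ℝ) ≠ 0 := Nat.cast_ne_zero.2 (by omega)
  have hnK : n - K ≠ 0 := by omega
  have hua : u (n - K) = D - a n := by
    simp only [hudef, if_neg hnK]
    congr 2
    omega
  rw [hZts n]
  have hcancel : (u (n - K) / ((n - K : ℕ) : ℝ)) * (((n - K : ℕ) : ℝ) / n) =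
      u (n - K) / n := by
    field_simp
  rw [hcancel, hua]
  rw [hadef]
  field_simp
  ring
end

section
/- Let T be a finite alphabet and R ⊆ T* a factorial (subword-closed) set of words such that every word of R of length n extends to a word of R of length n+1 and is a suffix of one (e.g., the set of runs of a strongly connected automaton). Let V : T → ℝ and define W(n) = Σ_{τ∈R, |τ|=n} e^{V(τ)} with V additive over letters. If there exist constants n₀ ∈ ℕ and ε ∈ ℝ such that every τ ∈ R of length n is a factor of some τ' ∈ R' of length n + n₀ with V(τ') ≥ V(τ) + ε, where R' ⊆ R, then limsup_{n→∞} (1/n) ln Σ_{τ'∈R',|τ'|=n} e^{V(τ')} ≥ limsup_{n→∞} (1/n) ln W(n). -/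
open Filter

/-- Partition-function-style sum over the words of length `n` in `R`, with
letterwise-additive cost `V`. -/
noncomputable def wsum {T : Type*} (V : T → ℝ) (R : Set (List T)) (n : ℕ) : ℝ :=
  ∑' τ : {τ : List T // τ ∈ R ∧ τ.length = n}, Real.exp ((τ.1.map V).sum)

section Aux

variable {T : Type*} [Fintype T]

lemma finiteSub (R : Set (List T)) (n : ℕ) :
    {τ : List T | τ ∈ R ∧ τ.length = n}.Finite :=
  (List.finite_length_eq T n).subset fun _ hl => hl.2

lemma wsum_eq (V : T → ℝ) (R : Set (List T)) (n : ℕ)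
    [Fintype {τ : List T // τ ∈ R ∧ τ.length = n}] :
    wsum V R n = ∑ τ : {τ : List T // τ ∈ R ∧ τ.length = n}, Real.exp ((τ.1.map V).sum) :=
  tsum_fintype _

example (R : Set (List T)) (n : ℕ) : True := by
  haveI : Fintype {τ : List T // τ ∈ R ∧ τ.length = n} := (finiteSub R n).fintype
  trivial

lemma key_s18 (V : T → ℝ) (R R' : Set (List T)) (n₀ : ℕ) (ε : ℝ)
    (h : ∀ τ ∈ R, ∃ τ' ∈ R', τ'.length = τ.length + n₀ ∧ τ <:+: τ' ∧
        (τ.map V).sum + ε ≤ (τ'.map V).sum) (n : ℕ) :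
    wsum V R n ≤ ((n₀ : ℝ) + 1) * Real.exp (-ε) * wsum V R' (n + n₀) := by
  classical
  haveI : Fintype {τ : List T // τ ∈ R ∧ τ.length = n} := (finiteSub R n).fintype
  haveI : Fintype {τ : List T // τ ∈ R' ∧ τ.length = n + n₀} := (finiteSub R' (n + n₀)).fintype
  set A := {τ : List T // τ ∈ R ∧ τ.length = n} with hA
  set B := {τ : List T // τ ∈ R' ∧ τ.length = n + n₀} with hB
  have hch : ∀ τ : A, ∃ τ' : B, τ.1 <:+: τ'.1 ∧ (τ.1.map V).sum + ε ≤ (τ'.1.map V).sum := by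
    rintro ⟨τ, hτ, hlen⟩
    obtain ⟨τ', hτ', hlen', hinf, hV⟩ := h τ hτ
    exact ⟨⟨τ', hτ', by rw [hlen', hlen]⟩, hinf, hV⟩
  choose f hf1 hf2 using hch
  have hpos : ∀ a : A, ∃ k ≤ n₀, a.1 = ((f a).1.drop k).take n := by
    intro a
    obtain ⟨s, t, hst⟩ := hf1 a
    refine ⟨s.length, ?_, ?_⟩
    · have h1 : (f a).1.length = n + n₀ := (f a).2.2
      have h2 : a.1.length = n := a.2.2
      rw [← hst, List.length_append, List.length_append, h2] at h1
      omega
    · have : (f a).1.drop s.length = a.1 ++ t := by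
        rw [← hst, List.append_assoc, List.drop_left]
      rw [this]
      have h3 : (a.1 ++ t).take a.1.length = a.1 := List.take_left
      rw [a.2.2] at h3
      exact h3.symm
  choose pos hpos1 hpos2 using hpos
  have hfib : ∀ b : B, (Finset.univ.filter fun a : A => f a = b).card ≤ n₀ + 1 := by
    intro b
    have := Finset.card_le_card_of_injOn
      (f := fun a : A => pos a) (s := Finset.univ.filter fun a : A => f a = b)
      (t := Finset.range (n₀ + 1)) ?_ ?_
    · simpa using this
    · intro a _; simp [Nat.lt_succ_iff, hpos1 a]
    · intro a₁ h₁ a₂ h₂ hposeq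
      simp only [Finset.coe_filter, Set.mem_setOf_eq, Finset.mem_univ, true_and] at h₁ h₂
      apply Subtype.ext
      simp only at hposeq
      rw [hpos2 a₁, hpos2 a₂, h₁, h₂, hposeq]
  have step1 : wsum V R n ≤ Real.exp (-ε) * ∑ a : A, Real.exp (((f a).1.map V).sum) := by
    rw [wsum_eq, Finset.mul_sum]
    apply Finset.sum_le_sum
    intro a _
    rw [← Real.exp_add]
    exact Real.exp_le_exp.2 (by linarith [hf2 a])
  have step2 : ∑ a : A, Real.exp (((f a).1.map V).sum)
      ≤ ((n₀ : ℝ) + 1) * wsum V R' (n + n₀) := by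
    rw [wsum_eq]
    have hcomp := Finset.sum_comp (s := (Finset.univ : Finset A))
      (fun b : B => Real.exp ((b.1.map V).sum)) f
    calc ∑ a : A, Real.exp (((f a).1.map V).sum)
        = ∑ b ∈ Finset.univ.image f,
            ((Finset.univ.filter fun a => f a = b).card) • Real.exp ((b.1.map V).sum) := hcomp
      _ ≤ ∑ b ∈ Finset.univ.image f, ((n₀ : ℝ) + 1) * Real.exp ((b.1.map V).sum) := by
          apply Finset.sum_le_sum
          intro b _
          rw [nsmul_eq_mul]
          apply mul_le_mul_of_nonneg_right _ (Real.exp_pos _).le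
          exact_mod_cast hfib b
      _ ≤ ∑ b : B, ((n₀ : ℝ) + 1) * Real.exp ((b.1.map V).sum) :=
          Finset.sum_le_sum_of_subset_of_nonneg (Finset.subset_univ _)
            (fun b _ _ => by positivity)
      _ = ((n₀ : ℝ) + 1) * ∑ b : B, Real.exp ((b.1.map V).sum) := by
          rw [Finset.mul_sum]
  calc wsum V R n ≤ Real.exp (-ε) * ∑ a : A, Real.exp (((f a).1.map V).sum) := step1
    _ ≤ Real.exp (-ε) * (((n₀ : ℝ) + 1) * wsum V R' (n + n₀)) := by
        apply mul_le_mul_of_nonneg_left step2 (Real.exp_nonneg _)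
    _ = ((n₀ : ℝ) + 1) * Real.exp (-ε) * wsum V R' (n + n₀) := by ring

lemma wsum_nonneg (V : T → ℝ) (R : Set (List T)) (n : ℕ) : 0 ≤ wsum V R n :=
  tsum_nonneg fun _ => (Real.exp_pos _).le

lemma le_wsum (V : T → ℝ) (R : Set (List T)) (n : ℕ) (m : ℝ) (hm : ∀ t, m ≤ V t)
    (hne : ∃ τ ∈ R, τ.length = n) : Real.exp (n * m) ≤ wsum V R n := by
  haveI : Finite {τ : List T // τ ∈ R ∧ τ.length = n} := (finiteSub R n).to_subtype
  obtain ⟨τ, hτ, hlen⟩ := hne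
  have hterm : (n : ℝ) * m ≤ (τ.map V).sum := by
    have h1 := List.card_nsmul_le_sum (τ.map V) m (by
      intro x hx; obtain ⟨t, _, rfl⟩ := List.mem_map.1 hx; exact hm t)
    rwa [List.length_map, hlen, nsmul_eq_mul] at h1
  refine le_trans (Real.exp_le_exp.2 hterm) ?_
  exact Summable.le_tsum (f := fun x : {τ : List T // τ ∈ R ∧ τ.length = n} =>
    Real.exp ((x.1.map V).sum)) (Summable.of_finite) ⟨τ, hτ, hlen⟩
    (fun j _ => (Real.exp_pos _).le)

set_option maxHeartbeats 1000000 in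
lemma wsum_le (V : T → ℝ) (R : Set (List T)) (n : ℕ) (M : ℝ) (hM : ∀ t, V t ≤ M) :
    wsum V R n ≤ (Fintype.card T : ℝ) ^ n * Real.exp (n * M) := by
  haveI : Fintype {τ : List T // τ ∈ R ∧ τ.length = n} := (finiteSub R n).fintype
  rw [wsum_eq]
  have hcard : Fintype.card {τ : List T // τ ∈ R ∧ τ.length = n} ≤ Fintype.card T ^ n := by
    have hinj := Fintype.card_le_of_injective (fun τ : {τ : List T // τ ∈ R ∧ τ.length = n} =>
        (fun i : Fin n => τ.1.get (Fin.cast τ.2.2.symm i))) ?_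
    · simpa using hinj
    · intro τ₁ τ₂ hEq
      apply Subtype.ext
      apply List.ext_get (by rw [τ₁.2.2, τ₂.2.2])
      intro i h1 h2
      have h3 : i < n := by rw [← τ₁.2.2]; exact h1
      exact congrFun hEq ⟨i, h3⟩
  calc ∑ τ : {τ : List T // τ ∈ R ∧ τ.length = n}, Real.exp ((τ.1.map V).sum)
      ≤ ∑ _τ : {τ : List T // τ ∈ R ∧ τ.length = n}, Real.exp (n * M) := by
        apply Finset.sum_le_sum
        intro τ _
        apply Real.exp_le_exp.2
        have h1 := List.sum_le_card_nsmul (τ.1.map V) M (by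
          intro x hx; obtain ⟨t, _, rfl⟩ := List.mem_map.1 hx; exact hM t)
        rwa [List.length_map, τ.2.2, nsmul_eq_mul] at h1
    _ = (Fintype.card {τ : List T // τ ∈ R ∧ τ.length = n} : ℝ) * Real.exp (n * M) := by
        rw [Finset.sum_const, Finset.card_univ, nsmul_eq_mul]
    _ ≤ (Fintype.card T : ℝ) ^ n * Real.exp (n * M) := by
        apply mul_le_mul_of_nonneg_right _ (Real.exp_pos _).le
        exact_mod_cast hcard

end Aux

/-- let `R` be a factorial, extendable set of words and `R' ⊆ R`.
If every `τ ∈ R` is a factor of some `τ' ∈ R'` exactly `n₀` letters longer and of cost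
at least `V(τ) + ε`, then the free-energy limsup of `R'` is at least that of `R`. -/
theorem stmt18 {T : Type*} [Fintype T] (R R' : Set (List T)) (V : T → ℝ)
    (hsub : R' ⊆ R)
    (hfact : ∀ τ ∈ R, ∀ τ₀ : List T, τ₀ <:+: τ → τ₀ ∈ R)
    (hext : ∀ τ ∈ R, ∃ τ' ∈ R, τ'.length = τ.length + 1 ∧ τ <:+: τ')
    (n₀ : ℕ) (ε : ℝ)
    (h : ∀ τ ∈ R, ∃ τ' ∈ R', τ'.length = τ.length + n₀ ∧ τ <:+: τ' ∧
        (τ.map V).sum + ε ≤ (τ'.map V).sum) :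
    limsup (fun n : ℕ => (1 / (n : ℝ)) * Real.log (wsum V R n)) atTop ≤
      limsup (fun n : ℕ => (1 / (n : ℝ)) * Real.log (wsum V R' n)) atTop := by
  classical
  set a : ℕ → ℝ := fun n => (1 / (n : ℝ)) * Real.log (wsum V R n) with ha
  set b : ℕ → ℝ := fun n => (1 / (n : ℝ)) * Real.log (wsum V R' n) with hb
  by_cases hR : R = ∅
  · have hR' : R' = ∅ := Set.eq_empty_of_subset_empty (hR ▸ hsub)
    have hz : ∀ S : Set (List T), S = ∅ → ∀ n, wsum V S n = 0 := by
      intro S hS n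
      haveI : IsEmpty {τ : List T // τ ∈ S ∧ τ.length = n} :=
        ⟨fun x => by rw [hS] at x; exact x.2.1⟩
      exact tsum_empty
    have : a = b := by
      funext n; rw [ha, hb]; simp only [hz R hR n, hz R' hR' n]
    rw [this]
  · -- main case
    obtain ⟨τ₀, hτ₀⟩ := Set.nonempty_iff_ne_empty.2 hR
    have hnil : [] ∈ R := hfact τ₀ hτ₀ [] List.nil_infix
    have hlen : ∀ n : ℕ, ∃ τ ∈ R, τ.length = n := by
      intro n
      induction n with
      | zero => exact ⟨[], hnil, rfl⟩
      | succ k ih =>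
        obtain ⟨τ, hτ, hlenτ⟩ := ih
        obtain ⟨τ', hτ', hlen', _⟩ := hext τ hτ
        exact ⟨τ', hτ', by rw [hlen', hlenτ]⟩
    -- T is nonempty
    obtain ⟨τ₁, hτ₁, hτ₁len⟩ := hlen 1
    obtain ⟨t₀, rfl⟩ := List.length_eq_one_iff.1 hτ₁len
    have hcardT : 1 ≤ Fintype.card T := Fintype.card_pos_iff.2 ⟨t₀⟩
    -- bounds on V
    obtain ⟨M, hM⟩ := (Set.finite_range V).bddAbove
    obtain ⟨m, hm⟩ := (Set.finite_range V).bddBelow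
    replace hM : ∀ t, V t ≤ M := fun t => hM ⟨t, rfl⟩
    replace hm : ∀ t, m ≤ V t := fun t => hm ⟨t, rfl⟩
    set D₁ : ℝ := Real.log (Fintype.card T) + M with hD₁
    set D : ℝ := max D₁ 0 with hD
    have hD0 : 0 ≤ D := le_max_right _ _
    have hWpos : ∀ n, 0 < wsum V R n :=
      fun n => lt_of_lt_of_le (Real.exp_pos _) (le_wsum V R n m hm (hlen n))
    -- generic upper bound for the (1/n) log of any wsum
    have hgen : ∀ (S : Set (List T)) (n : ℕ), (1 / (n : ℝ)) * Real.log (wsum V S n) ≤ D := by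
      intro S n
      rcases Nat.eq_zero_or_pos n with rfl | hn
      · simpa using hD0
      rcases (wsum_nonneg V S n).eq_or_lt with hw | hw
      · rw [← hw, Real.log_zero, mul_zero]; exact hD0
      have hn' : (0:ℝ) < n := by exact_mod_cast hn
      have h1 : Real.log (wsum V S n) ≤ (n : ℝ) * D₁ := by
        have h2 := Real.log_le_log hw (wsum_le V S n M hM)
        have hc : (0:ℝ) < (Fintype.card T : ℝ) ^ n := by positivity
        rw [Real.log_mul (ne_of_gt hc) (ne_of_gt (Real.exp_pos _)), Real.log_pow,
          Real.log_exp] at h2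
        rw [hD₁]; push_cast; linarith
      calc (1 / (n : ℝ)) * Real.log (wsum V S n) ≤ (1 / (n : ℝ)) * ((n : ℝ) * D₁) := by
            apply mul_le_mul_of_nonneg_left h1 (by positivity)
        _ = D₁ := by field_simp
        _ ≤ D := le_max_left _ _
    have hb_ub : ∀ n, b n ≤ D := fun n => hgen R' n
    have ha_lb : ∀ n, min m 0 ≤ a n := by
      intro n
      rcases Nat.eq_zero_or_pos n with rfl | hn
      · simp [ha, min_le_iff]
      have hn' : (0:ℝ) < n := by exact_mod_cast hn
      have h1 : (n : ℝ) * m ≤ Real.log (wsum V R n) := by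
        have := Real.log_le_log (Real.exp_pos _) (le_wsum V R n m hm (hlen n))
        rwa [Real.log_exp] at this
      have : m ≤ a n := by
        rw [ha]
        calc m = (1 / (n : ℝ)) * ((n : ℝ) * m) := by field_simp
          _ ≤ (1 / (n : ℝ)) * Real.log (wsum V R n) :=
            mul_le_mul_of_nonneg_left h1 (by positivity)
      exact le_trans (min_le_left _ _) this
    -- key inequality
    set K : ℝ := ((n₀ : ℝ) + 1) * Real.exp (-ε) with hK
    have hKpos : 0 < K := by positivity
    have hW'pos : ∀ n, 0 < wsum V R' (n + n₀) := by
      intro n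
      have h1 : 0 < K * wsum V R' (n + n₀) :=
        lt_of_lt_of_le (hWpos n) (key_s18 V R R' n₀ ε h n)
      rcases (wsum_nonneg V R' (n + n₀)).eq_or_lt with he | hlt
      · exfalso; rw [← he, mul_zero] at h1; exact lt_irrefl 0 h1
      · exact hlt
    set C' : ℝ := Real.log K + (n₀ : ℝ) * D with hC'
    have hab : ∀ n : ℕ, 1 ≤ n → a n ≤ b (n + n₀) + C' / (n : ℝ) := by
      intro n hn
      have hn' : (0:ℝ) < n := by exact_mod_cast hn
      have hnn₀ : (0:ℝ) < ((n + n₀ : ℕ) : ℝ) := by positivity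
      have h1 : Real.log (wsum V R n) ≤ Real.log K + Real.log (wsum V R' (n + n₀)) := by
        have h2 := Real.log_le_log (hWpos n) (key_s18 V R R' n₀ ε h n)
        rwa [Real.log_mul (ne_of_gt hKpos) (ne_of_gt (hW'pos n))] at h2
      have h3 : Real.log (wsum V R' (n + n₀)) = ((n + n₀ : ℕ) : ℝ) * b (n + n₀) := by
        rw [hb]; field_simp
      have hbD := hb_ub (n + n₀)
      rw [ha]
      calc (1 / (n : ℝ)) * Real.log (wsum V R n)
          ≤ (1 / (n : ℝ)) * (Real.log K + ((n + n₀ : ℕ) : ℝ) * b (n + n₀)) := by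
            apply mul_le_mul_of_nonneg_left _ (by positivity)
            rw [← h3]; exact h1
        _ = b (n + n₀) + (Real.log K + (n₀ : ℝ) * b (n + n₀)) / (n : ℝ) := by
            push_cast; field_simp; ring
        _ ≤ b (n + n₀) + C' / (n : ℝ) := by
            have h5 : (n₀ : ℝ) * b (n + n₀) ≤ (n₀ : ℝ) * D :=
              mul_le_mul_of_nonneg_left hbD (Nat.cast_nonneg _)
            gcongr
            rw [hC']
            linarith
    -- limsup argument
    have hbndb : IsBoundedUnder (· ≤ ·) atTop fun k : ℕ => b (k + n₀) :=
      isBoundedUnder_of ⟨D, fun k => hb_ub (k + n₀)⟩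
    have hLshift : limsup (fun k : ℕ => b (k + n₀)) atTop = limsup b atTop :=
      limsup_nat_add b n₀
    have hcob : IsCoboundedUnder (· ≤ ·) atTop a :=
      isCoboundedUnder_le_of_le atTop ha_lb
    refine le_of_forall_pos_le_add fun δ hδ => ?_
    have hev1 : ∀ᶠ k in atTop, b (k + n₀) < limsup b atTop + δ / 2 := by
      apply eventually_lt_of_limsup_lt
      · rw [hLshift]; linarith
      · exact hbndb
    have hev2 : ∀ᶠ n : ℕ in atTop, C' / (n : ℝ) < δ / 2 :=
      (tendsto_const_div_atTop_nhds_zero_nat C').eventually_lt_const (by linarith)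
    have hev3 : ∀ᶠ n : ℕ in atTop, a n ≤ limsup b atTop + δ := by
      filter_upwards [eventually_ge_atTop 1, hev1, hev2] with n h1 h2 h3
      have := hab n h1
      linarith
    exact limsup_le_of_le hcob hev3
end
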